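/- arXiv:1902.10429 — 2 statements merged into one kernel-verified Lean document; each statement's English description precedes it below -/
import Mathlib

section
/- Let G be a finite simple graph on {x_1,...,x_n} with no isolated vertex, let {x_i,x_j} be an edge of G, and let S be an independent set of G such that no vertex of S is adjacent to x_i or to x_j. Suppose moreover that every vertex of G outside S ∪ {x_i, x_j} is adjacent to some vertex in S ∪ {x_i, x_j}. Define the graph G' = G^{{x_i,x_j},S} by adding a new vertex x_{n+1} adjacent to all vertices x_k with x_k ≠ x_i, x_k ≠ x_j and x_k ∉ S. Then im(G') = im(G). -/
/-!
The old vertices span an induced copy of `G` in `G'`, so induced matchings of `G` lift to `G'`,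
and those of `G'` avoiding the new vertex `none` come from `G`. If an induced matching of `G'`
contains an edge `{none, y}`, its other edges avoid the neighbours of `none`, so they lie in
`S ∪ {i, j}`, which spans the single edge `{i, j}`. The matching `{none, y}` is then traded for
`{i, j}`, and `{none, y}, {i, j}` for `{i, j}, {y, z}`: inducedness keeps `y` away from `i` and `j`,
so domination gives it a neighbour `z ∈ S`.
-/
open MvPolynomial PowerSeries

/-- A matching of a simple graph: a set of pairwise disjoint edges. -/
def IsMatchingSet {V : Type*} (G : SimpleGraph V) (M : Finset (Sym2 V)) : Prop :=
  (↑M : Set (Sym2 V)) ⊆ G.edgeSet ∧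
    ∀ e ∈ M, ∀ f ∈ M, e ≠ f → ∀ v, v ∈ e → v ∉ f

/-- An induced matching: a matching such that no edge of `G` meets two distinct
edges of the matching. -/
def IsInducedMatchingSet {V : Type*} (G : SimpleGraph V) (M : Finset (Sym2 V)) : Prop :=
  IsMatchingSet G M ∧
    ∀ e ∈ G.edgeSet, ∀ f ∈ M, ∀ g ∈ M, f ≠ g →
      ¬((∃ v, v ∈ e ∧ v ∈ f) ∧ (∃ w, w ∈ e ∧ w ∈ g))

/-- The matching number `m(G)`. -/
noncomputable def matchNum {V : Type*} (G : SimpleGraph V) : ℕ :=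
  sSup {k | ∃ M : Finset (Sym2 V), IsMatchingSet G M ∧ M.card = k}

/-- The induced matching number `im(G)`. -/
noncomputable def indMatchNum {V : Type*} (G : SimpleGraph V) : ℕ :=
  sSup {k | ∃ M : Finset (Sym2 V), IsInducedMatchingSet G M ∧ M.card = k}

/-- The `S`-suspension `G^S`: add a new vertex (`none`) joined to every vertex not in `S`. -/
def sSusp {V : Type*} (G : SimpleGraph V) (S : Set V) : SimpleGraph (Option V) :=
  SimpleGraph.fromRel (fun a b =>
    (∃ x y, a = some x ∧ b = some y ∧ G.Adj x y) ∨
    (a = none ∧ ∃ y, b = some y ∧ y ∉ S))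

/-- The `{x_i,x_j}, S`-suspension: add a new vertex (`none`) joined to every vertex
outside `S ∪ {i, j}`. -/
def eSusp {V : Type*} (G : SimpleGraph V) (i j : V) (S : Set V) : SimpleGraph (Option V) :=
  SimpleGraph.fromRel (fun a b =>
    (∃ x y, a = some x ∧ b = some y ∧ G.Adj x y) ∨
    (a = none ∧ ∃ y, b = some y ∧ y ∉ S ∧ y ≠ i ∧ y ≠ j))

/-- The edge ideal of a graph. -/
noncomputable def edgeIdeal (K : Type*) [Field K] {σ : Type*} (G : SimpleGraph σ) :
    Ideal (MvPolynomial σ K) :=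
  Ideal.span {p | ∃ i j, G.Adj i j ∧ p = X i * X j}

/-- The Hilbert function of `R/I` (standard grading). -/
noncomputable def hilbFun (K : Type*) [Field K] {σ : Type*}
    (I : Ideal (MvPolynomial σ K)) (n : ℕ) : ℕ :=
  Module.finrank K ((homogeneousSubmodule σ K n).map
    (Ideal.Quotient.mkₐ K I).toLinearMap)

/-- The Hilbert series of `R/I`, as a power series over `ℚ`. -/
noncomputable def hilbSeries (K : Type*) [Field K] {σ : Type*}
    (I : Ideal (MvPolynomial σ K)) : PowerSeries ℚ :=
  PowerSeries.mk fun n => (hilbFun K I n : ℚ)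

/-- `HilbEq K I d h` says that the Hilbert series of `R/I` equals `h(λ)/(1-λ)^d`
with `h(1) ≠ 0`, i.e. `h` is the `h`-polynomial and `d = dim R/I`. -/
def HilbEq (K : Type*) [Field K] {σ : Type*} (I : Ideal (MvPolynomial σ K))
    (d : ℕ) (h : Polynomial ℤ) : Prop :=
  hilbSeries K I * (1 - PowerSeries.X) ^ d =
    ((h.map (Int.castRingHom ℚ) : Polynomial ℚ) : PowerSeries ℚ) ∧ h.eval 1 ≠ 0

/-- `regBound K I r` : there is a finite graded free resolution of `R/I` all of whose
generator degrees in homological degree `i` are at most `i + r`.  The minimal free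
resolution realizes `r = reg(R/I)`, and the generator degrees of any graded free
resolution contain those of the minimal one, hence
`reg(R/I) = sInf {r | regBound K I r}`. -/
noncomputable def regBound (K : Type*) [Field K] {σ : Type*}
    (I : Ideal (MvPolynomial σ K)) (r : ℕ) : Prop :=
  ∃ (L : ℕ) (k : ℕ → ℕ) (d : (i : ℕ) → Fin (k i) → ℕ)
    (φ : (i : ℕ) → ((Fin (k (i + 1)) →₀ MvPolynomial σ K) →ₗ[MvPolynomial σ K]
      (Fin (k i) →₀ MvPolynomial σ K)))
    (ε : (Fin (k 0) →₀ MvPolynomial σ K) →ₗ[MvPolynomial σ K] (MvPolynomial σ K ⧸ I)),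
    (∀ i, L ≤ i → k i = 0) ∧
    (∀ (i : ℕ) (b : Fin (k (i + 1))) (a : Fin (k i)),
      (φ i (Finsupp.single b 1)) a ∈ homogeneousSubmodule σ K (d (i + 1) b - d i a) ∧
      (d (i + 1) b < d i a → (φ i (Finsupp.single b 1)) a = 0)) ∧
    (∀ a : Fin (k 0), ε (Finsupp.single a 1) ∈
      (homogeneousSubmodule σ K (d 0 a)).map (Ideal.Quotient.mkₐ K I).toLinearMap) ∧
    Function.Surjective ε ∧
    LinearMap.range (φ 0) = LinearMap.ker ε ∧
    (∀ i : ℕ, LinearMap.range (φ (i + 1)) = LinearMap.ker (φ i)) ∧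
    (∀ (i : ℕ) (a : Fin (k i)), d i a ≤ i + r)

/-- The Castelnuovo–Mumford regularity of `R/I`. -/
noncomputable def reg (K : Type*) [Field K] {σ : Type*}
    (I : Ideal (MvPolynomial σ K)) : ℕ :=
  sInf {r | regBound K I r}

open SimpleGraph

section InducedMatching

variable {V W : Type*} {G : SimpleGraph V} {H : SimpleGraph W}

theorem isInducedMatchingSet_iff {M : Finset (Sym2 V)} :
    IsInducedMatchingSet G M ↔ IsMatchingSet G M ∧
      ∀ e ∈ M, ∀ f ∈ M, e ≠ f → ∀ v ∈ e, ∀ w ∈ f, ¬ G.Adj v w := by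
  refine ⟨fun ⟨hM, hind⟩ => ⟨hM, fun e he f hf hef v hv w hw hvw => ?_⟩,
    fun ⟨hM, hnadj⟩ => ⟨hM, ?_⟩⟩
  · exact hind s(v, w) hvw e he f hf hef
      ⟨⟨v, Sym2.mem_mk_left v w, hv⟩, ⟨w, Sym2.mem_mk_right v w, hw⟩⟩
  · rintro d hd e he f hf hef ⟨⟨v, hvd, hve⟩, ⟨w, hwd, hwf⟩⟩
    by_cases hvw : v = w
    · exact hM.2 e he f hf hef v hve (hvw ▸ hwf)
    · rw [(Sym2.mem_and_mem_iff hvw).1 ⟨hvd, hwd⟩, mem_edgeSet] at hd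
      exact hnadj e he f hf hef v hve w hwf hd

theorem IsInducedMatchingSet.subset {M N : Finset (Sym2 V)} (hM : IsInducedMatchingSet G M)
    (hNM : N ⊆ M) : IsInducedMatchingSet G N :=
  ⟨⟨(Finset.coe_subset.2 hNM).trans hM.1.1, fun e he f hf => hM.1.2 e (hNM he) f (hNM hf)⟩,
    fun d hd e he f hf => hM.2 d hd e (hNM he) f (hNM hf)⟩

theorem IsInducedMatchingSet.exists_card_eq {M : Finset (Sym2 V)}
    (hM : IsInducedMatchingSet G M) {k : ℕ} (hk : k ≤ M.card) :
    ∃ N, IsInducedMatchingSet G N ∧ N.card = k :=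
  let ⟨N, hNM, hN⟩ := Finset.exists_subset_card_eq hk
  ⟨N, hM.subset hNM, hN⟩

theorem isInducedMatchingSet_map_iff (φ : G ↪g H) {M : Finset (Sym2 V)} :
    IsInducedMatchingSet H (M.map φ.toEmbedding.sym2Map) ↔ IsInducedMatchingSet G M := by
  simp [isInducedMatchingSet_iff, IsMatchingSet, Set.image_subset_iff, Sym2.mem_map,
    (Sym2.map.injective φ.injective).eq_iff]
  grind

theorem isInducedMatchingSet_singleton {a b : V} (h : G.Adj a b) :
    IsInducedMatchingSet G {s(a, b)} := by
  simp [isInducedMatchingSet_iff, IsMatchingSet, h]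

theorem isInducedMatchingSet_pair [DecidableEq V] {a b c d : V} (hab : G.Adj a b)
    (hcd : G.Adj c d)
    (hsep : ∀ u ∈ s(a, b), ∀ v ∈ s(c, d), u ≠ v ∧ ¬ G.Adj u v) :
    IsInducedMatchingSet G {s(a, b), s(c, d)} := by
  simp only [isInducedMatchingSet_iff, IsMatchingSet, Finset.coe_pair, Set.insert_subset_iff,
    Set.singleton_subset_iff, mem_edgeSet, Finset.mem_insert, Finset.mem_singleton]
  refine ⟨⟨⟨hab, hcd⟩, ?_⟩, ?_⟩
  · rintro e (rfl | rfl) f (rfl | rfl) hef v hve hvf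
    · exact hef rfl
    · exact (hsep v hve v hvf).1 rfl
    · exact (hsep v hvf v hve).1 rfl
    · exact hef rfl
  · rintro e (rfl | rfl) f (rfl | rfl) hef v hve w hwf
    · exact absurd rfl hef
    · exact (hsep v hve w hwf).2
    · exact fun hvw => (hsep w hwf v hve).2 hvw.symm
    · exact absurd rfl hef

theorem indMatchNum_eq_of_forall_exists_card_le
    (hGH : ∀ M, IsInducedMatchingSet G M → ∃ N, IsInducedMatchingSet H N ∧ M.card ≤ N.card)
    (hHG : ∀ N, IsInducedMatchingSet H N → ∃ M, IsInducedMatchingSet G M ∧ N.card ≤ M.card) :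
    indMatchNum G = indMatchNum H := by
  unfold indMatchNum
  congr 1
  ext k
  constructor
  · rintro ⟨M, hM, rfl⟩
    obtain ⟨N, hN, hle⟩ := hGH M hM
    exact hN.exists_card_eq hle
  · rintro ⟨N, hN, rfl⟩
    obtain ⟨M, hM, hle⟩ := hHG N hN
    exact hM.exists_card_eq hle

end InducedMatching

theorem Sym2.mem_range_map_some {V : Type*} {e : Sym2 (Option V)} (he : none ∉ e) :
    e ∈ Set.range (Sym2.map some) := by
  induction e using Sym2.ind with
  | _ a b =>
    rcases a with _ | a
    · simp at he
    rcases b with _ | b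
    · simp at he
    exact ⟨s(a, b), rfl⟩

theorem Finset.exists_map_sym2Map_some_eq {V : Type*} {N : Finset (Sym2 (Option V))}
    (hN : ∀ e ∈ N, none ∉ e) :
    ∃ M : Finset (Sym2 V), M.map Function.Embedding.some.sym2Map = N := by
  classical
  have hrange : (N : Set (Sym2 (Option V))) ⊆ Sym2.map some '' Set.univ := by
    rw [Set.image_univ]
    exact fun e he => Sym2.mem_range_map_some (hN e he)
  obtain ⟨M, -, hM⟩ := Finset.subset_set_image_iff.1 hrange
  exact ⟨M, by rw [Finset.map_eq_image]; exact hM⟩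

section ESusp

variable {V : Type*} {G : SimpleGraph V} {i j : V} {S : Set V}

@[simp]
theorem eSusp_adj_some_some {a b : V} :
    (eSusp G i j S).Adj (some a) (some b) ↔ G.Adj a b := by
  simp [eSusp, G.adj_comm b a]
  exact fun h => h.ne

@[simp]
theorem eSusp_adj_none_some {y : V} :
    (eSusp G i j S).Adj none (some y) ↔ y ∉ S ∧ y ≠ i ∧ y ≠ j := by
  simp [eSusp]

variable (G i j S) in
def eSuspEmbedding : G ↪g eSusp G i j S where
  toEmbedding := Function.Embedding.some
  map_rel_iff' := eSusp_adj_some_some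

theorem eSusp_edge_eq_of_none_mem {e : Sym2 (Option V)} (he : e ∈ (eSusp G i j S).edgeSet)
    (hnone : none ∈ e) : ∃ y, e = s(none, some y) ∧ y ∉ S ∧ y ≠ i ∧ y ≠ j := by
  obtain ⟨b, rfl⟩ := Sym2.mem_iff_exists.1 hnone
  rcases b with _ | y
  · simp at he
  · exact ⟨y, rfl, eSusp_adj_none_some.1 he⟩

theorem edge_eq_of_forall_mem (hS : ∀ x ∈ S, ∀ y ∈ S, ¬ G.Adj x y)
    (hSij : ∀ x ∈ S, ¬ G.Adj x i ∧ ¬ G.Adj x j) {e : Sym2 V} (he : e ∈ G.edgeSet)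
    (hsub : ∀ u ∈ e, u ∈ S ∨ u = i ∨ u = j) : e = s(i, j) := by
  induction e using Sym2.ind with
  | _ a b =>
    rw [mem_edgeSet] at he
    have he' := he.symm
    rcases hsub a (Sym2.mem_mk_left a b) with ha | rfl | rfl <;>
      rcases hsub b (Sym2.mem_mk_right a b) with hb | rfl | rfl <;>
      simp_all [Sym2.eq_swap]

theorem IsInducedMatchingSet.subset_pair_of_none_mem [DecidableEq V]
    (hS : ∀ x ∈ S, ∀ y ∈ S, ¬ G.Adj x y) (hSij : ∀ x ∈ S, ¬ G.Adj x i ∧ ¬ G.Adj x j)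
    {N : Finset (Sym2 (Option V))} (hN : IsInducedMatchingSet (eSusp G i j S) N) {y : V}
    (hy : s(none, some y) ∈ N) : N ⊆ {s(none, some y), s(some i, some j)} := by
  obtain ⟨⟨hedge, hdisj⟩, hsep⟩ := isInducedMatchingSet_iff.1 hN
  -- another edge of `N` avoids `none` (matching) and its neighbours (inducedness)
  intro f hf
  rw [Finset.mem_insert, Finset.mem_singleton, or_iff_not_imp_left]
  intro hfy
  obtain ⟨f', rfl⟩ :=
    Sym2.mem_range_map_some (hdisj _ hy f hf (Ne.symm hfy) none (Sym2.mem_mk_left _ _))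
  have hf' : f' ∈ G.edgeSet := (eSuspEmbedding G i j S).map_mem_edgeSet_iff.1 (hedge hf)
  refine congrArg (Sym2.map some) (edge_eq_of_forall_mem hS hSij hf' fun u hu => ?_)
  by_contra! hu'
  exact hsep _ hy _ hf (Ne.symm hfy) none (Sym2.mem_mk_left _ _) (some u)
    (Sym2.mem_map.2 ⟨u, hu, rfl⟩) (eSusp_adj_none_some.2 hu')

theorem IsInducedMatchingSet.exists_card_le_of_none_mem (hij : G.Adj i j)
    (hS : ∀ x ∈ S, ∀ y ∈ S, ¬ G.Adj x y) (hSij : ∀ x ∈ S, ¬ G.Adj x i ∧ ¬ G.Adj x j)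
    (hdom : ∀ x : V, x ∉ S → x ≠ i → x ≠ j → ∃ y, (y ∈ S ∨ y = i ∨ y = j) ∧ G.Adj x y)
    {N : Finset (Sym2 (Option V))} (hN : IsInducedMatchingSet (eSusp G i j S) N)
    {e : Sym2 (Option V)} (he : e ∈ N) (hnone : none ∈ e) :
    ∃ M, IsInducedMatchingSet G M ∧ N.card ≤ M.card := by
  classical
  obtain ⟨y, rfl, hyS, hyi, hyj⟩ := eSusp_edge_eq_of_none_mem (hN.1.1 he) hnone
  have hsub := hN.subset_pair_of_none_mem hS hSij he
  by_cases hijN : s(some i, some j) ∈ N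
  · have hyij : ¬ G.Adj y i ∧ ¬ G.Adj y j := by
      have hsep := (isInducedMatchingSet_iff.1 hN).2 _ he _ hijN (by simp) (some y)
        (Sym2.mem_mk_right _ _)
      exact ⟨mt eSusp_adj_some_some.2 (hsep (some i) (Sym2.mem_mk_left _ _)),
        mt eSusp_adj_some_some.2 (hsep (some j) (Sym2.mem_mk_right _ _))⟩
    obtain ⟨z, hz, hyz⟩ := hdom y hyS hyi hyj
    replace hz : z ∈ S :=
      hz.resolve_right (by rintro (rfl | rfl); exacts [hyij.1 hyz, hyij.2 hyz])
    have hiS : i ∉ S := fun hi => (hSij i hi).2 hij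
    have hjS : j ∉ S := fun hj => (hSij j hj).1 hij.symm
    refine ⟨{s(i, j), s(y, z)}, isInducedMatchingSet_pair hij hyz ?_, ?_⟩
    · simp only [Sym2.mem_iff]
      rintro u (rfl | rfl) v (rfl | rfl) <;> grind [G.adj_comm]
    · calc N.card ≤ 2 := (Finset.card_le_card hsub).trans Finset.card_le_two
        _ = _ := (Finset.card_pair (by simp [hyi.symm, hyj.symm])).symm
  · rw [Finset.pair_comm, Finset.subset_insert_iff_of_notMem hijN] at hsub
    exact ⟨{s(i, j)}, isInducedMatchingSet_singleton hij, Finset.card_le_card hsub⟩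

end ESusp

theorem stmt_3_general {V : Type*} (G : SimpleGraph V)
    (i j : V) (hij : G.Adj i j) (S : Set V)
    (hS : ∀ x ∈ S, ∀ y ∈ S, ¬ G.Adj x y)
    (hSij : ∀ x ∈ S, ¬ G.Adj x i ∧ ¬ G.Adj x j)
    (hdom : ∀ x : V, x ∉ S → x ≠ i → x ≠ j →
      ∃ y, (y ∈ S ∨ y = i ∨ y = j) ∧ G.Adj x y) :
    indMatchNum (eSusp G i j S) = indMatchNum G := by
  refine indMatchNum_eq_of_forall_exists_card_le (fun N hN => ?_) fun M hM =>
    ⟨_, (isInducedMatchingSet_map_iff (eSuspEmbedding G i j S)).2 hM, (Finset.card_map _).ge⟩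
  by_cases hnone : ∃ e ∈ N, none ∈ e
  · obtain ⟨e, he, hnone⟩ := hnone
    exact hN.exists_card_le_of_none_mem hij hS hSij hdom he hnone
  · push Not at hnone
    obtain ⟨M, rfl⟩ := Finset.exists_map_sym2Map_some_eq hnone
    exact ⟨M, (isInducedMatchingSet_map_iff (eSuspEmbedding G i j S)).1 hN,
      (Finset.card_map _).le⟩

/-- induced matching number of the `{x_i,x_j}, S`-suspension. -/
theorem stmt_3 {V : Type*} [Fintype V] (G : SimpleGraph V)
    (hiso : ∀ v : V, ∃ w, G.Adj v w) (i j : V) (hij : G.Adj i j) (S : Set V)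
    (hS : ∀ x ∈ S, ∀ y ∈ S, ¬ G.Adj x y)
    (hSij : ∀ x ∈ S, ¬ G.Adj x i ∧ ¬ G.Adj x j)
    (hdom : ∀ x : V, x ∉ S → x ≠ i → x ≠ j →
      ∃ y, (y ∈ S ∨ y = i ∨ y = j) ∧ G.Adj x y) :
    indMatchNum (eSusp G i j S) = indMatchNum G :=
  stmt_3_general G i j hij S hS hSij hdom
end

section
/- Let G be a finite simple graph with no isolated vertex and S an independent set of G. Then the Hilbert series of R'/I(G^S) satisfies H_{R'/I(G^S)}(λ) = H_{R/I(G)}(λ) + λ/(1-λ)^{|S|+1}, where R = K[x_1,...,x_n], R' = K[x_1,...,x_{n+1}], and G^S is the S-suspension. -/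
open MvPolynomial PowerSeries

/-!
The edge ideal is a monomial ideal whose standard monomials are the monomials with independent
support, so its Hilbert function counts those monomials degree by degree. In `G^S` a monomial
not involving the new variable `x` is independent exactly when it is independent in `G`; one
divisible by `x` is independent exactly when its support lies in `S ∪ {x}`, i.e. it is `x` times
an arbitrary monomial in `|S| + 1` variables. These contribute `λ/(1-λ)^{|S|+1}`.
-/

theorem PowerSeries.inv_one_sub_pow_eq_mk_choose {𝕜 : Type*} [Field 𝕜] (d : ℕ) :
    ((1 - X : 𝕜⟦X⟧) ^ (d + 1))⁻¹ = mk fun n => ((d + n).choose d : 𝕜) := by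
  rw [PowerSeries.inv_eq_iff_mul_eq_one (by simp), ← mk_one_pow_eq_mk_choose_add, ← mul_pow,
    mk_one_mul_one_sub_eq_one, one_pow]

theorem Finsupp.single_add_single_le_iff {σ : Type*} {i j : σ} (hij : i ≠ j) (m : σ →₀ ℕ) :
    Finsupp.single i 1 + Finsupp.single j 1 ≤ m ↔ i ∈ m.support ∧ j ∈ m.support := by
  classical
  simp only [Finsupp.le_def, Finsupp.mem_support_iff, Finsupp.add_apply, Finsupp.single_apply]
  constructor
  · intro h
    have hi := h i
    have hj := h j
    simp [hij, hij.symm] at hi hj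
    omega
  · rintro ⟨hi, hj⟩ a
    rcases eq_or_ne i a with rfl | hai
    · simp [hij.symm]; omega
    rcases eq_or_ne j a with rfl | haj
    · simp [hai]; omega
    simp [hai, haj]

theorem Finsupp.degree_option {V : Type*} (m : Option V →₀ ℕ) :
    m.degree = m none + m.some.degree :=
  Finsupp.sum_option_index m (fun _ x => x) (fun _ => rfl) (fun _ _ _ => rfl)

theorem Finsupp.preimage_some_support {V : Type*} (m : Option V →₀ ℕ) :
    Option.some ⁻¹' ↑m.support = (↑m.some.support : Set V) := by
  ext; simp [Finsupp.some_apply]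

theorem Finsupp.support_subset_insertNone_iff {V : Type*} (m : Option V →₀ ℕ) (S : Finset V) :
    m.support ⊆ S.insertNone ↔ m.some.support ⊆ S := by
  simp only [Finset.subset_iff, Finsupp.mem_support_iff, Finsupp.some_apply,
    Finset.mem_insertNone, Option.mem_def]
  exact ⟨fun h x hx => h hx x rfl, by rintro h _ hx a rfl; exact h hx⟩

section MonomialIdeal

variable {K : Type*} [Field K] {σ : Type*}

/-- `hI` says that `I` is the monomial ideal with standard monomials `s`: the standard monomials
of degree `d` then map to a basis of the degree-`d` part of `R/I`. -/
theorem hilbFun_eq_ncard_of_mem_iff (I : Ideal (MvPolynomial σ K)) (s : Set (σ →₀ ℕ))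
    (hI : ∀ p, p ∈ I ↔ ∀ m ∈ p.support, m ∉ s) (d : ℕ) :
    hilbFun K I d = {m ∈ s | m.degree = d}.ncard := by
  set f := (Ideal.Quotient.mkₐ K I).toLinearMap
  set W := restrictSupport K {m ∈ s | m.degree = d}
  have hmap : (homogeneousSubmodule σ K d).map f = W.map f := by
    rw [homogeneousSubmodule_eq_finsupp_supported, ← restrictSupport]
    refine le_antisymm ?_ (Submodule.map_mono (restrictSupport_mono K fun m hm => hm.2))
    rw [restrictSupport_eq_span, Submodule.map_span, Submodule.span_le]
    rintro _ ⟨_, ⟨m, hm, rfl⟩, rfl⟩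
    by_cases hms : m ∈ s
    · exact ⟨_, (monomial_mem_restrictSupport K).2 (Or.inl ⟨hms, hm⟩), rfl⟩
    · have hmI : MvPolynomial.monomial m (1 : K) ∈ I := (hI _).2 fun m' hm' => by
        rwa [Finset.mem_singleton.1 (support_monomial_subset hm')]
      rw [SetLike.mem_coe, show f (MvPolynomial.monomial m 1) = 0 from
        Ideal.Quotient.eq_zero_iff_mem.2 hmI]
      exact zero_mem _
  have hinj : Function.Injective (f ∘ₗ W.subtype) := by
    rw [← LinearMap.ker_eq_bot, LinearMap.ker_eq_bot']
    rintro ⟨p, hp⟩ hfp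
    have hpI : p ∈ I := Ideal.Quotient.eq_zero_iff_mem.1 hfp
    ext1
    simp only [ZeroMemClass.coe_zero, ← support_eq_empty, Finset.eq_empty_iff_forall_notMem]
    exact fun m hm => (hI p).1 hpI m hm (hp hm).1
  rw [hilbFun, hmap, ← Submodule.range_subtype W, ← LinearMap.range_comp,
    LinearMap.finrank_range_of_inj hinj,
    Module.finrank_eq_nat_card_basis (basisRestrictSupport K _),
    Nat.card_coe_set_eq]

def indepMonomials (H : SimpleGraph σ) : Set (σ →₀ ℕ) :=
  {m | H.IsIndepSet ↑m.support}

theorem edgeIdeal_eq_span_monomial (H : SimpleGraph σ) :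
    edgeIdeal K H = Ideal.span ((MvPolynomial.monomial · (1 : K)) ''
      {e | ∃ i j, H.Adj i j ∧ e = Finsupp.single i 1 + Finsupp.single j 1}) := by
  have hX (i j : σ) : (MvPolynomial.X i * MvPolynomial.X j : MvPolynomial σ K) =
      MvPolynomial.monomial (Finsupp.single i 1 + Finsupp.single j 1) 1 := by
    simp only [MvPolynomial.X, monomial_mul, mul_one]
  unfold edgeIdeal
  congr 1
  ext p
  constructor
  · rintro ⟨i, j, hij, rfl⟩
    exact ⟨_, ⟨i, j, hij, rfl⟩, (hX i j).symm⟩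
  · rintro ⟨_, ⟨i, j, hij, rfl⟩, rfl⟩
    exact ⟨i, j, hij, (hX i j).symm⟩

theorem mem_edgeIdeal_iff (H : SimpleGraph σ) (p : MvPolynomial σ K) :
    p ∈ edgeIdeal K H ↔ ∀ m ∈ p.support, m ∉ indepMonomials H := by
  rw [edgeIdeal_eq_span_monomial, mem_ideal_span_monomial_image]
  refine forall₂_congr fun m _ => ?_
  simp only [indepMonomials, Set.mem_ofPred_eq, SimpleGraph.isIndepSet_iff, Set.Pairwise,
    not_forall, not_not, exists_prop]
  constructor
  · rintro ⟨_, ⟨i, j, hij, rfl⟩, hle⟩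
    obtain ⟨hi, hj⟩ := (Finsupp.single_add_single_le_iff hij.ne m).1 hle
    exact ⟨i, hi, j, hj, hij.ne, hij⟩
  · rintro ⟨i, hi, j, hj, -, hij⟩
    exact ⟨_, ⟨i, j, hij, rfl⟩, (Finsupp.single_add_single_le_iff hij.ne m).2 ⟨hi, hj⟩⟩

theorem hilbFun_edgeIdeal (H : SimpleGraph σ) (d : ℕ) :
    hilbFun K (edgeIdeal K H) d = {m ∈ indepMonomials H | m.degree = d}.ncard :=
  hilbFun_eq_ncard_of_mem_iff _ _ (mem_edgeIdeal_iff H) d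

theorem indepMonomials_degree_zero (H : SimpleGraph σ) :
    {m ∈ indepMonomials H | m.degree = 0} = {0} := by
  ext m
  simp +contextual [indepMonomials, Finsupp.degree_eq_zero_iff]

end MonomialIdeal

section Suspension

variable {V : Type*} {G : SimpleGraph V}

@[simp]
theorem sSusp_adj_some_some {S : Set V} {x y : V} :
    (sSusp G S).Adj (some x) (some y) ↔ G.Adj x y := by
  simpa [sSusp, G.adj_comm y x] using G.ne_of_adj

@[simp]
theorem sSusp_adj_none_some {S : Set V} {y : V} : (sSusp G S).Adj none (some y) ↔ y ∉ S := by
  simp [sSusp]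

@[simp]
theorem sSusp_adj_some_none {S : Set V} {y : V} : (sSusp G S).Adj (some y) none ↔ y ∉ S := by
  rw [SimpleGraph.adj_comm, sSusp_adj_none_some]

theorem isIndepSet_sSusp_iff {S : Set V} {A : Set (Option V)} :
    (sSusp G S).IsIndepSet A ↔ G.IsIndepSet (some ⁻¹' A) ∧ (none ∈ A → some ⁻¹' A ⊆ S) := by
  constructor
  · intro h
    exact ⟨fun x hx y hy hxy hadj => h hx hy (by simpa using hxy) (by simpa using hadj),
      fun hA y hy => by_contra fun hyS => h hA hy (by simp) (by simpa using hyS)⟩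
  · rintro ⟨hG, hS⟩ (_ | x) hx (_ | y) hy hxy hadj
    · exact hxy rfl
    · exact (sSusp_adj_none_some.1 hadj) (hS hx hy)
    · exact (sSusp_adj_some_none.1 hadj) (hS hy hx)
    · exact hG hx hy (by simpa using hxy) (sSusp_adj_some_some.1 hadj)

theorem mem_indepMonomials_sSusp_iff {S : Set V} {m : Option V →₀ ℕ} :
    m ∈ indepMonomials (sSusp G S) ↔
      m.some ∈ indepMonomials G ∧ (m none ≠ 0 → ↑m.some.support ⊆ S) := by
  simp [indepMonomials, isIndepSet_sSusp_iff, Finsupp.preimage_some_support]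

theorem indepMonomials_sSusp_degree_succ [DecidableEq V] {S : Finset V} (hS : G.IsIndepSet ↑S)
    (d : ℕ) :
    {m ∈ indepMonomials (sSusp G ↑S) | m.degree = d + 1} =
      Finsupp.embDomain .some '' {m ∈ indepMonomials G | m.degree = d + 1} ∪
        (· + Finsupp.single none 1) '' ↑(S.insertNone.finsuppAntidiag d) := by
  ext m
  simp only [Set.mem_ofPred_eq, Set.mem_union, Set.mem_image, Finset.mem_coe,
    Finset.mem_finsuppAntidiag']
  constructor
  · rintro ⟨hm, hdeg⟩
    obtain ⟨hG, hsupp⟩ := mem_indepMonomials_sSusp_iff.1 hm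
    rw [Finsupp.degree_option] at hdeg
    by_cases h0 : m none = 0
    · refine Or.inl ⟨m.some, ⟨hG, by omega⟩, ?_⟩
      ext (_ | a) <;> simp [h0, Finsupp.some_apply]
    · right
      obtain ⟨q, rfl⟩ : ∃ q, m = q + Finsupp.single none 1 :=
        ⟨m - Finsupp.single none 1,
          (tsub_add_cancel_of_le (Finsupp.single_le_iff.2 (Nat.one_le_iff_ne_zero.2 h0))).symm⟩
      simp only [Finsupp.some_add, Finsupp.some_single_none, add_zero, Finsupp.add_apply,
        Finsupp.single_eq_same] at hsupp hdeg
      refine ⟨q, ⟨?_, (q.support_subset_insertNone_iff S).2 (by exact_mod_cast hsupp (by simp))⟩,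
        rfl⟩
      show q.degree = d
      have := q.degree_option
      omega
  · rintro (⟨f, ⟨hf, hdeg⟩, rfl⟩ | ⟨q, ⟨hdeg, hq⟩, rfl⟩)
    · refine ⟨mem_indepMonomials_sSusp_iff.2 ⟨by simpa using hf, by simp⟩, ?_⟩
      rw [Finsupp.embDomain_eq_mapDomain, Finsupp.degree_mapDomain, hdeg]
    · have hqS : ↑q.some.support ⊆ (↑S : Set V) := by
        exact_mod_cast (q.support_subset_insertNone_iff S).1 hq
      simp only [mem_indepMonomials_sSusp_iff, Finsupp.some_add, Finsupp.some_single_none,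
        add_zero]
      exact ⟨⟨hS.mono hqS, fun _ => hqS⟩, by rw [map_add, Finsupp.degree_single, ← hdeg]; rfl⟩

theorem ncard_indepMonomials_sSusp_degree_succ [Finite V] [DecidableEq V] {S : Finset V}
    (hS : G.IsIndepSet ↑S) (d : ℕ) :
    {m ∈ indepMonomials (sSusp G ↑S) | m.degree = d + 1}.ncard =
      {m ∈ indepMonomials G | m.degree = d + 1}.ncard + (S.card + d).choose S.card := by
  have hdisj : Disjoint (Finsupp.embDomain .some '' {m ∈ indepMonomials G | m.degree = d + 1})
      ((· + Finsupp.single none 1) '' ↑(S.insertNone.finsuppAntidiag d)) := by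
    rw [Set.disjoint_left]
    rintro _ ⟨f, -, rfl⟩ ⟨q, -, hq⟩
    simpa using congrArg (· none) hq
  have hfin : {m ∈ indepMonomials G | m.degree = d + 1}.Finite :=
    (Finsupp.finite_of_degree_eq (d + 1)).subset fun m hm => hm.2
  rw [indepMonomials_sSusp_degree_succ hS, Set.ncard_union_eq hdisj (hfin.image _),
    Set.ncard_image_of_injective _ (Finsupp.embDomain_injective _),
    Set.ncard_image_of_injective _ (add_left_injective _), Set.ncard_coe_finset,
    Finset.card_finsuppAntidiag_nat_eq_choose, Finset.card_insertNone, Nat.add_right_comm,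
    add_tsub_cancel_right, Nat.choose_symm_add]

end Suspension

theorem stmt_8_general (K : Type*) [Field K] {n : ℕ} (G : SimpleGraph (Fin n))
    (S : Finset (Fin n))
    (hS : ∀ x ∈ S, ∀ y ∈ S, ¬ G.Adj x y) :
    hilbSeries K (edgeIdeal K (sSusp G (↑S : Set (Fin n)))) =
      hilbSeries K (edgeIdeal K G) +
        PowerSeries.X * ((1 - PowerSeries.X) ^ (S.card + 1))⁻¹ := by
  have hSindep : G.IsIndepSet ↑S := fun x hx y hy _ => hS x hx y hy
  rw [PowerSeries.inv_one_sub_pow_eq_mk_choose]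
  ext (_ | d)
  · simp [hilbSeries, hilbFun_edgeIdeal, indepMonomials_degree_zero]
  · rw [map_add, coeff_succ_X_mul]
    simp only [hilbSeries, coeff_mk, hilbFun_edgeIdeal,
      ncard_indepMonomials_sSusp_degree_succ hSindep]
    norm_cast

/-- Hilbert series of the `S`-suspension:
`H_{R'/I(G^S)}(λ) = H_{R/I(G)}(λ) + λ/(1-λ)^{|S|+1}`. -/
theorem stmt_8 (K : Type*) [Field K] {n : ℕ} (G : SimpleGraph (Fin n))
    (hiso : ∀ v : Fin n, ∃ w, G.Adj v w) (S : Finset (Fin n))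
    (hS : ∀ x ∈ S, ∀ y ∈ S, ¬ G.Adj x y) :
    hilbSeries K (edgeIdeal K (sSusp G (↑S : Set (Fin n)))) =
      hilbSeries K (edgeIdeal K G) +
        PowerSeries.X * ((1 - PowerSeries.X) ^ (S.card + 1))⁻¹ :=
  stmt_8_general K G S hS
end
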